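/- arXiv:1906.03558 — 2 statements merged into one kernel-verified Lean document; each statement's English description precedes it below -/
import Mathlib

section
/- Let α be a nonnegative random variable taking values in [0,H) (0 < H ≤ ∞) with absolutely continuous distribution function F, density f, survival function F̄ = 1 - F positive on [0,H), and finite mean Eα > c > 0. If α is DMRD (its mean residual demand function m is nonincreasing on [0,H)), then the n-firm Cournot game with payoffs π_i(x_1,…,x_n) = x_i·(E[(α - Σ_j x_j)_+] - c) has exactly one symmetric pure Nash equilibrium. -/
/-!
Put `G t = E(α - t)₊ = ∫_t^∞ F̄` (layer cake), so `G' = -F̄`. Against total rival output `s` a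
firm's profit `y (G (y + s) - c)` has derivative `G Q - y F̄ Q - c` with `Q = y + s`. Writing
`G = F̄ m`, this marginal revenue is `F̄ Q (m Q - y)`: as long as it is positive it strictly
decreases when `y` grows and `Q` does not shrink, because `F̄` and (DMRD) `m` are nonincreasing.
So the profit is unimodal, a symmetric profile `z` is an equilibrium iff `G (n z) - z F̄ (n z) = c`,
and that equation has at most one positive root; it has one by the intermediate value theorem,
since its left side is `Eα > c` at `z = 0` and at most `G z → 0`.
-/

open MeasureTheory Set Filter Function

noncomputable section

/-- Expected payoff of firm `i` in the `n`-firm Cournot game with stochastic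
demand intercept `α` and constant marginal cost `c`. -/
def payoff {Ω : Type*} [MeasurableSpace Ω] (μ : Measure Ω) (α : Ω → ℝ) (c : ℝ)
    {n : ℕ} (x : Fin n → ℝ) (i : Fin n) : ℝ :=
  x i * ((∫ ω, max (α ω - ∑ j, x j) 0 ∂μ) - c)

/-- Pure Nash equilibrium with nonnegative outputs. -/
def IsNash {Ω : Type*} [MeasurableSpace Ω] (μ : Measure Ω) (α : Ω → ℝ) (c : ℝ)
    {n : ℕ} (x : Fin n → ℝ) : Prop :=
  (∀ i, 0 ≤ x i) ∧
    ∀ i : Fin n, ∀ y : ℝ, 0 ≤ y →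
      payoff μ α c (Function.update x i y) i ≤ payoff μ α c x i

/-- The mean residual demand (MRD) function `m(x) = (1/F̄(x)) ∫_x^H F̄(u) du`
(the survival function vanishes beyond `H`, so the integral may be taken over `(x,∞)`). -/
def mrd (F : ℝ → ℝ) (x : ℝ) : ℝ :=
  (∫ u in Ioi x, (1 - F u)) / (1 - F x)

theorem antitone_measureReal_lt {Ω : Type*} [MeasurableSpace Ω] (μ : Measure Ω) [IsFiniteMeasure μ]
    (X : Ω → ℝ) : Antitone fun u => μ.real {ω | u < X ω} :=
  fun _ _ huv => measureReal_mono fun _ (h : _ < _) => huv.trans_lt h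

theorem measureReal_lt_eq_one_sub {Ω : Type*} [MeasurableSpace Ω] {μ : Measure Ω}
    [IsProbabilityMeasure μ] {X : Ω → ℝ} (hX : Measurable X) (u : ℝ) :
    μ.real {ω | u < X ω} = 1 - (μ {ω | X ω ≤ u}).toReal := by
  rw [← measureReal_def, ← probReal_compl_eq_one_sub (s := {ω | X ω ≤ u}) (hX measurableSet_Iic)]
  simp only [compl_ofPred, not_le]

section TailIntegral

variable {Ω : Type*} [MeasurableSpace Ω] {μ : Measure Ω} {X : Ω → ℝ}

theorem lintegral_posPart_sub_eq_lintegral_meas_lt (hX : AEMeasurable X μ) (t : ℝ) :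
    ∫⁻ ω, ENNReal.ofReal (max (X ω - t) 0) ∂μ = ∫⁻ u in Ioi t, μ {ω | u < X ω} := by
  rw [lintegral_eq_lintegral_meas_lt μ (f := fun ω => max (X ω - t) 0)
    (.of_forall fun _ => le_max_right _ _) (by fun_prop)]
  have hlevel : ∀ s ∈ Ioi (0 : ℝ), μ {ω | s < max (X ω - t) 0} = μ {ω | s + t < X ω} := by
    intro s hs
    congr 1
    ext ω
    simp only [mem_ofPred_eq, lt_max_iff, mem_Ioi.mp hs |>.not_gt, or_false]
    constructor <;> intro h <;> linarith
  have hshift := (measurePreserving_add_right volume t).setLIntegral_comp_preimage_emb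
    (measurableEmbedding_addRight t) (fun u => μ {ω | u < X ω}) (Ioi t)
  rw [preimage_add_const_Ioi, sub_self] at hshift
  rw [setLIntegral_congr_fun measurableSet_Ioi hlevel, hshift]

variable [IsFiniteMeasure μ]

theorem integrableOn_measureReal_lt_and_integral_posPart_sub (hX : Integrable X μ) (t : ℝ) :
    IntegrableOn (fun u => μ.real {ω | u < X ω}) (Ioi t) ∧
      ∫ ω, max (X ω - t) 0 ∂μ = ∫ u in Ioi t, μ.real {ω | u < X ω} := by
  have hlint : ∫⁻ u in Ioi t, ENNReal.ofReal (μ.real {ω | u < X ω}) =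
      ∫⁻ ω, ENNReal.ofReal (max (X ω - t) 0) ∂μ := by
    simp only [measureReal_def, ENNReal.ofReal_toReal (measure_ne_top μ _)]
    exact (lintegral_posPart_sub_eq_lintegral_meas_lt hX.aemeasurable t).symm
  have hpos : Integrable (fun ω => max (X ω - t) 0) μ := (hX.sub (integrable_const t)).pos_part
  have hint : IntegrableOn (fun u => μ.real {ω | u < X ω}) (Ioi t) :=
    ⟨(antitone_measureReal_lt μ X).measurable.aestronglyMeasurable,
      (hasFiniteIntegral_iff_ofReal (.of_forall fun _ => measureReal_nonneg)).2
        (hlint ▸ hpos.lintegral_lt_top)⟩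
  refine ⟨hint, ?_⟩
  rw [integral_eq_lintegral_of_nonneg_ae (f := fun ω => max (X ω - t) 0)
      (.of_forall fun _ => le_max_right _ _) hpos.aestronglyMeasurable,
    integral_eq_lintegral_of_nonneg_ae (.of_forall fun _ => measureReal_nonneg)
      hint.aestronglyMeasurable, hlint]

end TailIntegral

theorem continuous_integral_Iic {f : ℝ → ℝ} (hf : Integrable f) :
    Continuous fun x => ∫ u in Iic x, f u :=
  continuous_iff_continuousAt.2 fun x =>
    (hf.integrableOn.continuousOn_Iic_primitive_Iic).continuousAt (Iic_mem_nhds (lt_add_one x))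

theorem hasDerivAt_integral_Ioi {f : ℝ → ℝ} (hf : Continuous f)
    (hint : ∀ a, IntegrableOn f (Ioi a)) (t : ℝ) :
    HasDerivAt (fun b => ∫ x in Ioi b, f x) (-f t) t := by
  have hsplit : (fun b => ∫ x in Ioi b, f x) = fun b => (∫ x in Ioi t, f x) - ∫ x in t..b, f x :=
    funext fun b => by
      rw [← intervalIntegral.integral_Ioi_sub_Ioi' (hint t) (hint b), sub_sub_cancel]
  rw [hsplit]
  exact (hf.integral_hasStrictDerivAt t t).hasDerivAt.const_sub _

theorem setIntegral_Ioi_eq_zero_of_antitone {f : ℝ → ℝ} (hf : Antitone f) (hf0 : ∀ u, 0 ≤ f u)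
    {t : ℝ} (ht : f t = 0) : ∫ u in Ioi t, f u = 0 :=
  setIntegral_eq_zero_of_forall_eq_zero fun u hu => le_antisymm (ht ▸ hf (le_of_lt hu)) (hf0 u)

theorem coe_lt_of_ae_lt_of_measureReal_pos {Ω : Type*} [MeasurableSpace Ω] {μ : Measure Ω}
    {X : Ω → ℝ} {H : EReal} (hX : ∀ᵐ ω ∂μ, (X ω : EReal) < H) {v : ℝ}
    (hv : 0 < μ.real {ω | v < X ω}) : (v : EReal) < H := by
  by_contra! hHv
  have hnull : μ {ω | v < X ω} = 0 := measure_mono_null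
    (fun ω (hω : v < X ω) (hlt : (X ω : EReal) < H) =>
      (hlt.trans_le hHv).not_gt (EReal.coe_lt_coe_iff.2 hω))
    (ae_iff.1 hX)
  simp [measureReal_def, hnull] at hv

def marginalRevenue (G S : ℝ → ℝ) (q Q : ℝ) : ℝ :=
  G Q - q * S Q

/-- Abstracts the pair `G t = E(α - t)₊`, `S = F̄`; then `G / S` is the mean residual demand. -/
structure DecreasingMeanResidual (G S : ℝ → ℝ) : Prop where
  antitone : Antitone S
  nonneg : ∀ t, 0 ≤ S t
  eq_zero_of_eq_zero : ∀ t, S t = 0 → G t = 0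
  div_le_div : ∀ u v, 0 ≤ u → u ≤ v → 0 < S v → G v / S v ≤ G u / S u

section MarginalRevenue

variable {G S : ℝ → ℝ} {c : ℝ}

theorem DecreasingMeanResidual.marginalRevenue_lt (hD : DecreasingMeanResidual G S)
    {u v y w : ℝ} (hu : 0 ≤ u) (huv : u ≤ v) (hyw : y < w) (hpos : 0 < marginalRevenue G S w v) :
    marginalRevenue G S w v < marginalRevenue G S y u := by
  have hv : 0 < S v := by
    refine (hD.nonneg v).lt_of_ne fun hv => hpos.ne ?_
    rw [marginalRevenue, ← hv, hD.eq_zero_of_eq_zero v hv.symm, mul_zero, sub_zero]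
  have hu' : 0 < S u := hv.trans_le (hD.antitone huv)
  have hMv : marginalRevenue G S w v = S v * (G v / S v - w) := by
    rw [marginalRevenue]; field_simp
  have hMu : marginalRevenue G S y u = S u * (G u / S u - y) := by
    rw [marginalRevenue]; field_simp
  have hmv : 0 < G v / S v - w := pos_of_mul_pos_right (hMv ▸ hpos) hv.le
  have hm := hD.div_le_div u v hu huv hv
  calc marginalRevenue G S w v = S v * (G v / S v - w) := hMv
    _ < S v * (G u / S u - y) := mul_lt_mul_of_pos_left (by linarith) hv
    _ ≤ S u * (G u / S u - y) := mul_le_mul_of_nonneg_right (hD.antitone huv) (by linarith)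
    _ = marginalRevenue G S y u := hMu.symm

theorem hasDerivAt_profit (hG : ∀ t, HasDerivAt G (-S t) t) (s y : ℝ) :
    HasDerivAt (fun y => y * (G (y + s) - c)) (marginalRevenue G S y (y + s) - c) y := by
  have hGs : HasDerivAt (fun y => G (y + s)) (-S (y + s)) y := by
    simpa using (hG (y + s)).comp_add_const y s
  refine ((hasDerivAt_id' y).mul (hGs.sub_const c)).congr_deriv ?_
  rw [marginalRevenue]
  ring

theorem profit_le_of_marginalRevenue_eq (hG : ∀ t, HasDerivAt G (-S t) t)
    (hD : DecreasingMeanResidual G S) (hc : 0 < c)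
    {s z : ℝ} (hs : 0 ≤ s) (hz : 0 < z) (hfoc : marginalRevenue G S z (z + s) = c)
    {y : ℝ} (hy : 0 ≤ y) : y * (G (y + s) - c) ≤ z * (G (z + s) - c) := by
  have hcont : Continuous fun y => y * (G (y + s) - c) :=
    continuous_iff_continuousAt.2 fun y => (hasDerivAt_profit hG s y).continuousAt
  have hmono : StrictMonoOn (fun y => y * (G (y + s) - c)) (Icc 0 z) := by
    refine strictMonoOn_of_deriv_pos (convex_Icc 0 z) hcont.continuousOn fun x hx => ?_
    rw [interior_Icc] at hx
    rw [(hasDerivAt_profit hG s x).deriv, sub_pos, ← hfoc]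
    exact hD.marginalRevenue_lt (by linarith [hx.1]) (by linarith [hx.2]) hx.2 (hfoc ▸ hc)
  have hanti : StrictAntiOn (fun y => y * (G (y + s) - c)) (Ici z) := by
    refine strictAntiOn_of_deriv_neg (convex_Ici z) hcont.continuousOn fun x hx => ?_
    rw [interior_Ici] at hx
    rw [(hasDerivAt_profit hG s x).deriv, sub_neg]
    by_contra! hcx
    have hlt := hD.marginalRevenue_lt (u := z + s) (v := x + s) (by linarith)
      (by linarith [hx.out]) hx (hc.trans_le hcx)
    linarith
  rcases le_total y z with hyz | hzy
  · exact hmono.monotoneOn ⟨hy, hyz⟩ ⟨hz.le, le_rfl⟩ hyz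
  · exact hanti.antitoneOn (mem_Ici.2 le_rfl) hzy hzy

theorem marginalRevenue_eq_of_profit_le (hG : ∀ t, HasDerivAt G (-S t) t) {s z : ℝ}
    (hz : 0 < z) (hmax : ∀ y, 0 ≤ y → y * (G (y + s) - c) ≤ z * (G (z + s) - c)) :
    marginalRevenue G S z (z + s) = c := by
  have hloc : IsLocalMax (fun y => y * (G (y + s) - c)) z :=
    mem_of_superset (Ioi_mem_nhds hz) fun y hy => hmax y (le_of_lt hy)
  exact sub_eq_zero.1 (hloc.hasDerivAt_eq_zero (hasDerivAt_profit hG s z))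

theorem DecreasingMeanResidual.eq_of_marginalRevenue_eq (hD : DecreasingMeanResidual G S)
    (hc : 0 < c) {n a b : ℝ} (hn : 0 ≤ n) (ha : 0 < a) (hb : 0 < b)
    (hfa : marginalRevenue G S a (n * a) = c) (hfb : marginalRevenue G S b (n * b) = c) :
    a = b := by
  have key : ∀ {a b : ℝ}, 0 < a → a < b → marginalRevenue G S b (n * b) = c →
      c < marginalRevenue G S a (n * a) := fun ha hab hfb =>
    hfb ▸ hD.marginalRevenue_lt (by positivity)
      (mul_le_mul_of_nonneg_left hab.le hn) hab (hfb ▸ hc)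
  rcases lt_trichotomy a b with hab | rfl | hba
  · exact absurd hfa (key ha hab hfb).ne'
  · rfl
  · exact absurd hfb (key hb hba hfa).ne'

theorem exists_marginalRevenue_eq (hG : ∀ t, HasDerivAt G (-S t) t) (hS : Continuous S)
    (hS0 : ∀ t, 0 ≤ S t) (hGlim : Tendsto G atTop (nhds 0)) (hc : 0 < c) (hcG : c < G 0)
    {n : ℝ} (hn : 1 ≤ n) : ∃ z, 0 < z ∧ marginalRevenue G S z (n * z) = c := by
  have hGcont : Continuous G := continuous_iff_continuousAt.2 fun t => (hG t).continuousAt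
  have hGanti : Antitone G :=
    antitone_of_hasDerivAt_nonpos hG fun t => neg_nonpos.2 (hS0 t)
  obtain ⟨x, hxc, hx⟩ := ((hGlim.eventually (gt_mem_nhds hc)).and (eventually_gt_atTop 0)).exists
  have hcont : Continuous fun z => marginalRevenue G S z (n * z) := by
    unfold marginalRevenue
    fun_prop
  have hneg : marginalRevenue G S x (n * x) < c := by
    have := hGanti (le_mul_of_one_le_left hx.le hn)
    have := mul_nonneg hx.le (hS0 (n * x))
    rw [marginalRevenue]
    linarith
  have hpos : c < marginalRevenue G S 0 (n * 0) := by simpa [marginalRevenue] using hcG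
  obtain ⟨z, hz, hfoc⟩ := intermediate_value_Ioo' hx.le hcont.continuousOn ⟨hneg, hpos⟩
  exact ⟨z, hz.1, hfoc⟩

end MarginalRevenue

theorem sum_update_const {n : ℕ} (i : Fin n) (z y : ℝ) :
    ∑ j, update (fun _ : Fin n => z) i y j = y + (n * z - z) := by
  rw [Finset.sum_update_of_mem (Finset.mem_univ i), Finset.sum_const, nsmul_eq_mul,
    Finset.card_sdiff_of_subset (Finset.singleton_subset_iff.2 (Finset.mem_univ i)),
    Finset.card_univ, Fintype.card_fin, Finset.card_singleton,
    Nat.cast_sub i.pos]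
  ring

theorem isNash_const_iff {Ω : Type*} [MeasurableSpace Ω] (μ : Measure Ω) (α : Ω → ℝ) (c : ℝ)
    {n : ℕ} [NeZero n] {z : ℝ} (hz : 0 ≤ z) :
    IsNash μ α c (fun _ : Fin n => z) ↔ ∀ y, 0 ≤ y →
      y * ((∫ ω, max (α ω - (y + (n * z - z))) 0 ∂μ) - c) ≤
        z * ((∫ ω, max (α ω - (z + (n * z - z))) 0 ∂μ) - c) := by
  have hpayoff : ∀ (i : Fin n) y, payoff μ α c (update (fun _ => z) i y) i =
      y * ((∫ ω, max (α ω - (y + (n * z - z))) 0 ∂μ) - c) := fun i y => by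
    rw [payoff, sum_update_const, update_self]
  have hconst : ∀ i : Fin n, payoff μ α c (fun _ => z) i =
      z * ((∫ ω, max (α ω - (z + (n * z - z))) 0 ∂μ) - c) := fun i => by
    rw [← hpayoff i z, update_eq_self]
  simp only [IsNash, hpayoff, hconst]
  exact ⟨fun h => h.2 0, fun h => ⟨fun _ => hz, fun _ => h⟩⟩

theorem isNash_const_iff_marginalRevenue_eq {Ω : Type*} [MeasurableSpace Ω] {μ : Measure Ω}
    {α : Ω → ℝ} {G S : ℝ → ℝ} {c : ℝ} (hE : ∀ t, ∫ ω, max (α ω - t) 0 ∂μ = G t)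
    (hG : ∀ t, HasDerivAt G (-S t) t) (hD : DecreasingMeanResidual G S) (hc : 0 < c)
    {n : ℕ} [NeZero n] {z : ℝ} (hz : 0 < z) :
    IsNash μ α c (fun _ : Fin n => z) ↔ marginalRevenue G S z (n * z) = c := by
  simp only [isNash_const_iff μ α c hz.le, hE]
  have hs : 0 ≤ n * z - z := by nlinarith [(Nat.one_le_cast (α := ℝ)).2 (NeZero.one_le (n := n))]
  refine ⟨fun hmax => ?_, fun hfoc y => ?_⟩
  · simpa only [add_sub_cancel] using marginalRevenue_eq_of_profit_le hG hz hmax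
  · exact profit_le_of_marginalRevenue_eq hG hD hc hs hz (by rwa [add_sub_cancel])

theorem stmt4_general {Ω : Type*} [MeasurableSpace Ω] (μ : Measure Ω) [IsProbabilityMeasure μ]
    (α : Ω → ℝ) (hαmeas : Measurable α)
    (H : EReal)
    (hval : ∀ᵐ ω ∂μ, 0 ≤ α ω ∧ (α ω : EReal) < H)
    (hαint : Integrable α μ)
    (F f : ℝ → ℝ)
    (hF : ∀ x : ℝ, F x = (μ {ω | α ω ≤ x}).toReal)
    (hfint : Integrable f)
    (hdens : ∀ x : ℝ, F x = ∫ u in Iic x, f u)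
    (c : ℝ) (hc : 0 < c) (hcE : c < ∫ ω, α ω ∂μ)
    (n : ℕ) (hn : 1 ≤ n)
    (hDMRD : ∀ x y : ℝ, 0 ≤ x → x ≤ y → (y : EReal) < H → mrd F y ≤ mrd F x) :
    ∃! xs : ℝ, 0 < xs ∧ IsNash μ α c (fun _ : Fin n => xs) := by
  have : NeZero n := ⟨by omega⟩
  have hsurv : ∀ u, μ.real {ω | u < α ω} = 1 - F u := fun u => by
    rw [hF, measureReal_lt_eq_one_sub hαmeas]
  have htail := integrableOn_measureReal_lt_and_integral_posPart_sub hαint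
  simp only [hsurv] at htail
  set G := fun t => ∫ u in Ioi t, (1 - F u)
  have hE : ∀ t, ∫ ω, max (α ω - t) 0 ∂μ = G t := fun t => (htail t).2
  have hScont : Continuous fun u => 1 - F u :=
    continuous_const.sub (funext hdens ▸ continuous_integral_Iic hfint)
  have hG := hasDerivAt_integral_Ioi hScont fun t => (htail t).1
  have hS : Antitone fun u => 1 - F u := by simpa only [hsurv] using antitone_measureReal_lt μ α
  have hS0 : ∀ u, 0 ≤ 1 - F u := fun u => hsurv u ▸ measureReal_nonneg
  have hD : DecreasingMeanResidual G fun u => 1 - F u :=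
    ⟨hS, hS0, fun _ => setIntegral_Ioi_eq_zero_of_antitone hS hS0, fun u v hu huv hv =>
      hDMRD u v hu huv (coe_lt_of_ae_lt_of_measureReal_pos (hval.mono fun _ h => h.2)
        (hsurv v ▸ hv))⟩
  have hG0 : G 0 = ∫ ω, α ω ∂μ := by
    rw [← hE]
    exact integral_congr_ae (hval.mono fun ω h => by simp [h.1])
  obtain ⟨z, hz, hfoc⟩ := exists_marginalRevenue_eq hG hScont hS0
    (tendsto_integral_Ioi_zero tendsto_id) hc (hcE.trans_eq hG0.symm) (Nat.one_le_cast.2 hn)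
  refine ⟨z, ⟨hz, (isNash_const_iff_marginalRevenue_eq hE hG hD hc hz).2 hfoc⟩, ?_⟩
  rintro w ⟨hw, hNash⟩
  exact hD.eq_of_marginalRevenue_eq hc n.cast_nonneg hw hz
    ((isNash_const_iff_marginalRevenue_eq hE hG hD hc hw).1 hNash) hfoc

/-- If `α` is DMRD, then the Cournot game has exactly one symmetric pure Nash
equilibrium. -/
theorem stmt4 {Ω : Type*} [MeasurableSpace Ω] (μ : Measure Ω) [IsProbabilityMeasure μ]
    (α : Ω → ℝ) (hαmeas : Measurable α)
    (H : EReal) (hH : 0 < H)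
    (hval : ∀ᵐ ω ∂μ, 0 ≤ α ω ∧ (α ω : EReal) < H)
    (hαint : Integrable α μ)
    (F f : ℝ → ℝ)
    (hF : ∀ x : ℝ, F x = (μ {ω | α ω ≤ x}).toReal)
    (hfmeas : Measurable f) (hfnonneg : ∀ x, 0 ≤ f x) (hfint : Integrable f)
    (hdens : ∀ x : ℝ, F x = ∫ u in Iic x, f u)
    (hFbar : ∀ x : ℝ, 0 ≤ x → (x : EReal) < H → 0 < 1 - F x)
    (c : ℝ) (hc : 0 < c) (hcE : c < ∫ ω, α ω ∂μ)
    (n : ℕ) (hn : 1 ≤ n)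
    (hDMRD : ∀ x y : ℝ, 0 ≤ x → x ≤ y → (y : EReal) < H → mrd F y ≤ mrd F x) :
    ∃! xs : ℝ, 0 < xs ∧ IsNash μ α c (fun _ : Fin n => xs) :=
  stmt4_general μ α hαmeas H hval hαint F f hF hfint hdens c hc hcE n hn hDMRD
end
end

section
/- Let α be a nonnegative random variable taking values in [0,H) (0 < H ≤ ∞) with absolutely continuous distribution function F, continuous density f, survival function F̄ = 1 - F positive on [0,H), and finite mean Eα > c ≥ 0, and let n ≥ 1. Let L(x) := m(x) - c/F̄(x) - x/n and g(x) = x f(x)/F̄(x). If x* ∈ (0,H) satisfies L(x*) = 0 and g(x*) ≤ 1, then L'(x*) = (1/n)·(g(x*) - (n+1)) < 0. -/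
/-!
Write `F̄ = 1 - F` and `G x = ∫_x^∞ F̄`, so that `L = (G - c) / F̄ - x / n` with `G' = -F̄`
and `F̄' = -f`. At a root of `L` we have `(G - c) / F̄ = x / n`, and the quotient rule gives
`L' = -1 + x f / (n F̄) - 1 / n = (g - (n + 1)) / n`, which is negative as soon as `g ≤ 1`.
Differentiability of `G` needs `F̄` to be integrable near `x`: since `F̄ u = P(α > u)`, the
layer-cake formula bounds `∫_0^∞ F̄` by `E α⁺ < ∞`.
-/

open MeasureTheory Set Filter Function

noncomputable section

/-- The function `L(x) = m(x) - c/F̄(x) - x/n`. -/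
def Lfun (F : ℝ → ℝ) (c : ℝ) (n : ℕ) (x : ℝ) : ℝ :=
  mrd F x - c / (1 - F x) - x / n

open Topology

theorem hasDerivAt_integral_Iic {f : ℝ → ℝ} {x : ℝ} (hf : Integrable f)
    (hfx : ContinuousAt f x) : HasDerivAt (fun y => ∫ u in Iic y, f u) (f x) x := by
  have hsplit : (fun y => ∫ u in Iic y, f u) =
      fun y => (∫ u in Iic 0, f u) + ∫ u in 0..y, f u := by
    ext y
    rw [← intervalIntegral.integral_Iic_sub_Iic hf.integrableOn hf.integrableOn]
    ring
  rw [hsplit]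
  exact (intervalIntegral.integral_hasDerivAt_right hf.intervalIntegrable
    hf.aestronglyMeasurable.stronglyMeasurableAtFilter hfx).const_add _

theorem hasDerivAt_integral_Ioi_s12 {g : ℝ → ℝ} {a x : ℝ} (hg : IntegrableOn g (Ioi a))
    (hax : a < x) (hgx : ContinuousAt g x) :
    HasDerivAt (fun y => ∫ u in Ioi y, g u) (-g x) x := by
  have hsplit : (fun y => ∫ u in Ioi y, g u) =ᶠ[𝓝 x]
      fun y => (∫ u in Ioi a, g u) - ∫ u in a..y, g u := by
    filter_upwards [Ioi_mem_nhds hax] with y hy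
    rw [← intervalIntegral.integral_Ioi_sub_Ioi hg (le_of_lt hy), sub_sub_cancel]
  have hint : IntervalIntegrable g volume a x :=
    (intervalIntegrable_iff_integrableOn_Ioc_of_le hax.le).2 (hg.mono_set Ioc_subset_Ioi_self)
  have hmeas : StronglyMeasurableAtFilter g (𝓝 x) :=
    AEStronglyMeasurable.stronglyMeasurableAtFilter_of_mem hg.aestronglyMeasurable
      (Ioi_mem_nhds hax)
  exact HasDerivAt.congr_of_eventuallyEq
    ((intervalIntegral.integral_hasDerivAt_right hint hmeas hgx).const_sub _) hsplit

theorem integrableOn_Ioi_measureReal_lt {Ω : Type*} [MeasurableSpace Ω] {μ : Measure Ω}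
    {X : Ω → ℝ} (hX : Integrable X μ) :
    IntegrableOn (fun t => μ.real {ω | t < X ω}) (Ioi 0) := by
  have hanti : Antitone fun t => μ {ω | t < X ω} :=
    fun _ _ hst => measure_mono fun _ h => lt_of_le_of_lt hst h
  have hmeas : Measurable fun t => μ.real {ω | t < X ω} := hanti.measurable.ennreal_toReal
  refine ⟨hmeas.aestronglyMeasurable, ?_⟩
  have hpos : ∀ t ∈ Ioi (0 : ℝ), μ {ω | t < max (X ω) 0} = μ {ω | t < X ω} := by
    intro t ht
    congr 1
    ext ω
    simp [not_lt.2 (le_of_lt (mem_Ioi.1 ht))]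
  calc ∫⁻ t in Ioi 0, ‖μ.real {ω | t < X ω}‖ₑ
      ≤ ∫⁻ t in Ioi 0, μ {ω | t < X ω} :=
        lintegral_mono fun t => by
          rw [measureReal_def, Real.enorm_of_nonneg ENNReal.toReal_nonneg]
          exact ENNReal.ofReal_toReal_le
    _ = ∫⁻ ω, ENNReal.ofReal (max (X ω) 0) ∂μ := by
        rw [lintegral_eq_lintegral_meas_lt (f := fun ω => max (X ω) 0) μ
          (ae_of_all _ fun _ => le_max_right _ _) hX.pos_part.aemeasurable,
          setLIntegral_congr_fun measurableSet_Ioi hpos]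
    _ < ⊤ := hX.pos_part.lintegral_lt_top

theorem one_sub_probReal_le_eq_probReal_lt {Ω : Type*} [MeasurableSpace Ω] {μ : Measure Ω}
    [IsProbabilityMeasure μ] {X : Ω → ℝ} (hX : Measurable X) (x : ℝ) :
    1 - μ.real {ω | X ω ≤ x} = μ.real {ω | x < X ω} := by
  rw [← probReal_compl_eq_one_sub (measurableSet_le hX measurable_const)]
  congr 1
  ext ω
  simp

theorem hasDerivAt_sub_div_sub_div_of_eq_zero {G Φ : ℝ → ℝ} {φ c N x : ℝ}
    (hG : HasDerivAt G (-Φ x) x) (hΦ : HasDerivAt Φ (-φ) x) (hΦx : Φ x ≠ 0) (hN : N ≠ 0)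
    (hroot : (G x - c) / Φ x - x / N = 0) :
    HasDerivAt (fun y => (G y - c) / Φ y - y / N) (1 / N * (x * φ / Φ x - (N + 1))) x := by
  have hderiv : HasDerivAt (fun y => (G y - c) / Φ y - y / N)
      ((-Φ x * Φ x - (G x - c) * -φ) / Φ x ^ 2 - 1 / N) x :=
    ((hG.sub_const c).div hΦ hΦx).sub ((hasDerivAt_id' x).div_const N)
  convert hderiv using 1
  field_simp at hroot ⊢
  linear_combination -φ * hroot

theorem stmt12_general {Ω : Type*} [MeasurableSpace Ω] (μ : Measure Ω) [IsProbabilityMeasure μ]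
    (α : Ω → ℝ) (hαmeas : Measurable α)
    (H : EReal)
    (hαint : Integrable α μ)
    (F f : ℝ → ℝ)
    (hF : ∀ x : ℝ, F x = (μ {ω | α ω ≤ x}).toReal)
    (hfcont : Continuous f) (hfint : Integrable f)
    (hdens : ∀ x : ℝ, F x = ∫ u in Iic x, f u)
    (hFbar : ∀ x : ℝ, 0 ≤ x → (x : EReal) < H → 0 < 1 - F x)
    (c : ℝ)
    (n : ℕ) (hn : 1 ≤ n) :
    ∀ xs : ℝ, 0 < xs → (xs : EReal) < H →
      Lfun F c n xs = 0 → xs * f xs / (1 - F xs) ≤ 1 →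
        HasDerivAt (Lfun F c n)
          ((1 / (n : ℝ)) * (xs * f xs / (1 - F xs) - ((n : ℝ) + 1))) xs ∧
        (1 / (n : ℝ)) * (xs * f xs / (1 - F xs) - ((n : ℝ) + 1)) < 0 := by
  intro xs hxs hxsH hL hg
  have hFderiv : ∀ x, HasDerivAt F (f x) x := fun x => by
    simpa only [← funext hdens] using hasDerivAt_integral_Iic hfint hfcont.continuousAt
  have hFbar_eq : ∀ x, 1 - F x = μ.real {ω | x < α ω} := fun x => by
    rw [hF, ← measureReal_def, one_sub_probReal_le_eq_probReal_lt hαmeas]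
  have hFbar_int : IntegrableOn (fun u => 1 - F u) (Ioi (xs / 2)) := by
    simpa only [hFbar_eq] using
      (integrableOn_Ioi_measureReal_lt hαint).mono_set (Ioi_subset_Ioi (by positivity))
  have hFbar_cont : Continuous fun u => 1 - F u :=
    continuous_const.sub (continuous_iff_continuousAt.2 fun x => (hFderiv x).continuousAt)
  have hLfun : Lfun F c n = fun y => ((∫ u in Ioi y, (1 - F u)) - c) / (1 - F y) - y / n := by
    ext y
    simp only [Lfun, mrd, sub_div]
  have hn_pos : (0 : ℝ) < n := by exact_mod_cast hn
  refine ⟨hLfun ▸ hasDerivAt_sub_div_sub_div_of_eq_zero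
    (hasDerivAt_integral_Ioi_s12 hFbar_int (half_lt_self hxs) hFbar_cont.continuousAt)
    ((hFderiv xs).const_sub 1) (hFbar xs hxs.le hxsH).ne' hn_pos.ne' (by rwa [hLfun] at hL), ?_⟩
  exact mul_neg_of_pos_of_neg (by positivity) (by linarith)

/-- If `x* ∈ (0,H)` satisfies `L(x*) = 0` and `g(x*) ≤ 1`, where
`g(x) = x f(x)/F̄(x)`, then `L'(x*) = (1/n)(g(x*) - (n+1)) < 0`. -/
theorem stmt12 {Ω : Type*} [MeasurableSpace Ω] (μ : Measure Ω) [IsProbabilityMeasure μ]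
    (α : Ω → ℝ) (hαmeas : Measurable α)
    (H : EReal) (hH : 0 < H)
    (hval : ∀ᵐ ω ∂μ, 0 ≤ α ω ∧ (α ω : EReal) < H)
    (hαint : Integrable α μ)
    (F f : ℝ → ℝ)
    (hF : ∀ x : ℝ, F x = (μ {ω | α ω ≤ x}).toReal)
    (hfcont : Continuous f) (hfnonneg : ∀ x, 0 ≤ f x) (hfint : Integrable f)
    (hdens : ∀ x : ℝ, F x = ∫ u in Iic x, f u)
    (hFbar : ∀ x : ℝ, 0 ≤ x → (x : EReal) < H → 0 < 1 - F x)
    (c : ℝ) (hc : 0 ≤ c) (hcE : c < ∫ ω, α ω ∂μ)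
    (n : ℕ) (hn : 1 ≤ n) :
    ∀ xs : ℝ, 0 < xs → (xs : EReal) < H →
      Lfun F c n xs = 0 → xs * f xs / (1 - F xs) ≤ 1 →
        HasDerivAt (Lfun F c n)
          ((1 / (n : ℝ)) * (xs * f xs / (1 - F xs) - ((n : ℝ) + 1))) xs ∧
        (1 / (n : ℝ)) * (xs * f xs / (1 - F xs) - ((n : ℝ) + 1)) < 0 :=
  stmt12_general μ α hαmeas H hαint F f hF hfcont hfint hdens hFbar c n hn
end
end
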